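/- arXiv:2011.01055 — 3 statements merged into one kernel-verified Lean document; each statement's English description precedes it below -/
import Mathlib

section
/- Let d, d0, K ≥ 1 and let N be a PSD matrix on I0⊗I_1⊗…⊗I_K⊗O_1⊗…⊗O_K⊗O0 (dim I_k = dim O_k = d for k ≥ 1, dim I0 = dim O0 = d0) with Tr N ≤ d^K·d0. If Tr_{I O}(P_sym N P_sym) = c · J_id for some c ≥ 0, then for every d×d unitary U there exists c_U ≥ 0 such that Tr_{I O}[N·((J_U^{⊗K})^T ⊗ I_{I0 O0})] = c_U · J_id; that is, N neutralizes all unitary operations. -/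
/-!
Conventions: matrices on tensor products are indexed by products of `Fin` types;
the `K` slots are encoded as functions `Fin K → Fin d`; partial traces are
entrywise diagonal sums; `choi U (i,k) (j,l) = U k i * conj (U l j)`.

With `w_ij := |i⟩ ⊗ conj |U^{⊗K}⟫ ⊗ |j⟩`, the action is the Gram matrix
`Tr_{I O}[N ((J_U^{⊗K})ᵀ ⊗ I)] (ij, kl) = ⟨w_ij, N w_kl⟩`. Each `w_ij` is a permutation-invariant
product vector, so `P_sym` fixes it and `N` can be replaced by the PSD matrix `M = P_sym N P_sym`.
For `u` on `I0 ⊗ O0`, `⟨u, Tr_{I O}(M) u⟩ = ∑_p ⟨u ⊗ e_p, M (u ⊗ e_p)⟩`; since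
`Tr_{I O}(M) = c J_id` kills every `u` with `∑_m u(m,m) = 0`, positivity of `M` forces
`M (u ⊗ f) = 0` for all such `u`. Hence `M w_ij = δ_ij M w_00`, and the Gram matrix is
`⟨w_00, M w_00⟩ · J_id` with `⟨w_00, M w_00⟩ ≥ 0`.
-/

open Matrix Finset
open scoped ComplexOrder

noncomputable section

/-- Choi matrix of (the unitary channel induced by) a square matrix `U`. -/
def choi {n : ℕ} (U : Matrix (Fin n) (Fin n) ℂ) :
    Matrix (Fin n × Fin n) (Fin n × Fin n) ℂ :=
  fun p q => U p.2 p.1 * star (U q.2 q.1)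

/-- Index type for `K`-slot combs: `I0 × (I1⊗…⊗I_K) × (O1⊗…⊗O_K) × O0`. -/
abbrev IxK (d0 d K : ℕ) := Fin d0 × (Fin K → Fin d) × (Fin K → Fin d) × Fin d0

/-- `Tr_{I O}[C ((J^{⊗K})ᵀ ⊗ I_{I0 O0})]`: action of a `K`-slot comb on `K` copies
of a Choi matrix (the `k`-th copy sitting on `I_k ⊗ O_k`). -/
def actK {d0 d K : ℕ} (C : Matrix (IxK d0 d K) (IxK d0 d K) ℂ)
    (J : Matrix (Fin d × Fin d) (Fin d × Fin d) ℂ) :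
    Matrix (Fin d0 × Fin d0) (Fin d0 × Fin d0) ℂ :=
  fun x y => ∑ a, ∑ b, ∑ a', ∑ b',
    C (x.1, a, b, x.2) (y.1, a', b', y.2) * ∏ k, J (a k, b k) (a' k, b' k)

/-- The symmetrizer `P_sym = (1/K!) ∑_σ P_σ^I ⊗ P_σ^O`, acting as the identity on
`I0` and `O0`. -/
def PsymF (d0 d K : ℕ) : Matrix (IxK d0 d K) (IxK d0 d K) ℂ :=
  fun x y => (if x.1 = y.1 ∧ x.2.2.2 = y.2.2.2 then 1 else 0) *
    (((Nat.factorial K : ℂ))⁻¹ * ∑ σ : Equiv.Perm (Fin K),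
      if x.2.1 = y.2.1 ∘ σ ∧ x.2.2.1 = y.2.2.1 ∘ σ then 1 else 0)

/-- Partial trace over all the slot systems `I ⊗ O`, giving a matrix on `I0 × O0`. -/
def ptrIO {d0 d K : ℕ} (M : Matrix (IxK d0 d K) (IxK d0 d K) ℂ) :
    Matrix (Fin d0 × Fin d0) (Fin d0 × Fin d0) ℂ :=
  fun x y => ∑ a, ∑ b, M (x.1, a, b, x.2) (y.1, a, b, y.2)

theorem Matrix.PosSemidef.mulVec_eq_zero_of_sum_dotProduct_mulVec_eq_zero
    {𝕜 n ι : Type*} [RCLike 𝕜] [Fintype n] [Fintype ι] {M : Matrix n n 𝕜}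
    (hM : M.PosSemidef) {v : ι → n → 𝕜} (h : ∑ p, star (v p) ⬝ᵥ (M *ᵥ v p) = 0) (p : ι) :
    M *ᵥ v p = 0 :=
  (hM.dotProduct_mulVec_zero_iff _).mp <|
    (Finset.sum_eq_zero_iff_of_nonneg fun q _ => hM.dotProduct_mulVec_nonneg (v q)).mp h p
      (mem_univ p)

theorem Matrix.IsHermitian.star_dotProduct_mulVec {α n : Type*} [CommSemiring α] [StarRing α]
    [Fintype n] {M : Matrix n n α} (hM : M.IsHermitian) (x y : n → α) :
    star x ⬝ᵥ (M *ᵥ y) = star (M *ᵥ x) ⬝ᵥ y := by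
  rw [star_mulVec, hM.eq, dotProduct_mulVec]

theorem Matrix.IsHermitian.star_dotProduct_mul_mul_mulVec {α n : Type*} [CommSemiring α]
    [StarRing α] [Fintype n] {P : Matrix n n α} (hP : P.IsHermitian) (N : Matrix n n α)
    {v v' : n → α} (hv : P *ᵥ v = v) (hv' : P *ᵥ v' = v') :
    star v ⬝ᵥ ((P * N * P) *ᵥ v') = star v ⬝ᵥ (N *ᵥ v') := by
  rw [← mulVec_mulVec, ← mulVec_mulVec, hv', hP.star_dotProduct_mulVec, hv]

theorem choi_one_apply {n : ℕ} (q q' : Fin n × Fin n) :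
    choi (1 : Matrix (Fin n) (Fin n) ℂ) q q' =
      (if q.1 = q.2 then 1 else 0) * if q'.1 = q'.2 then 1 else 0 := by
  simp [choi, one_apply, eq_comm]

theorem choi_one_mulVec {n : ℕ} (u : Fin n × Fin n → ℂ) (q : Fin n × Fin n) :
    (choi (1 : Matrix (Fin n) (Fin n) ℂ) *ᵥ u) q = if q.1 = q.2 then ∑ m, u (m, m) else 0 := by
  simp [choi, mulVec, dotProduct, one_apply, Fintype.sum_prod_type, eq_comm]

/-- Index of the slot systems `I ⊗ O = (I_1 ⊗ … ⊗ I_K) ⊗ (O_1 ⊗ … ⊗ O_K)`. -/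
abbrev SlotIx (d K : ℕ) := (Fin K → Fin d) × (Fin K → Fin d)

section

variable {d0 d K : ℕ}

/-- The product vector `u ⊗ f`, with `u` on `I0 ⊗ O0` and `f` on `I ⊗ O`. -/
def tensorVec (u : Fin d0 × Fin d0 → ℂ) (f : SlotIx d K → ℂ) : IxK d0 d K → ℂ :=
  fun x => u (x.1, x.2.2.2) * f (x.2.1, x.2.2.1)

theorem sum_tensorVec_mul (u : Fin d0 × Fin d0 → ℂ) (f : SlotIx d K → ℂ)
    (h : IxK d0 d K → ℂ) :
    ∑ x, tensorVec u f x * h x = ∑ q, ∑ p, u q * f p * h (q.1, p.1, p.2, q.2) := by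
  rw [← Fintype.sum_prod_type']
  exact Fintype.sum_equiv ⟨fun x => ((x.1, x.2.2.2), (x.2.1, x.2.2.1)),
    fun y => (y.1.1, y.2.1, y.2.2, y.1.2), fun _ => rfl, fun _ => rfl⟩ _ _ fun _ => rfl

theorem sum_tensorVec_single_mul (i j : Fin d0) (f : SlotIx d K → ℂ) (h : IxK d0 d K → ℂ) :
    ∑ x, tensorVec (Pi.single (i, j) 1) f x * h x = ∑ p, f p * h (i, p.1, p.2, j) := by
  simp [sum_tensorVec_mul, Pi.single_apply]

theorem tensorVec_eq_sum_single (u : Fin d0 × Fin d0 → ℂ) (f : SlotIx d K → ℂ) :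
    tensorVec u f = ∑ p, f p • tensorVec u (Pi.single p 1) := by
  ext x
  simp [tensorVec, Finset.sum_apply, Pi.single_apply, mul_comm]

theorem tensorVec_sub_smul (u u' : Fin d0 × Fin d0 → ℂ) (a : ℂ) (f : SlotIx d K → ℂ) :
    tensorVec (u - a • u') f = tensorVec u f - a • tensorVec u' f := by
  ext x
  simp only [tensorVec, Pi.sub_apply, Pi.smul_apply, smul_eq_mul]
  ring

theorem star_tensorVec (u : Fin d0 × Fin d0 → ℂ) (f : SlotIx d K → ℂ) :
    star (tensorVec u f) = tensorVec (star u) (star f) := by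
  ext x
  simp [tensorVec]

theorem dotProduct_ptrIO_mulVec (M : Matrix (IxK d0 d K) (IxK d0 d K) ℂ)
    (u : Fin d0 × Fin d0 → ℂ) :
    star u ⬝ᵥ (ptrIO M *ᵥ u) =
      ∑ p, star (tensorVec u (Pi.single p 1)) ⬝ᵥ (M *ᵥ tensorVec u (Pi.single p 1)) := by
  simp only [star_tensorVec, Pi.star_single, star_one, dotProduct, mulVec]
  simp_rw [mul_comm (M _ _), sum_tensorVec_mul]
  simp [ptrIO, Pi.single_apply, Finset.mul_sum, Finset.sum_mul, Fintype.sum_prod_type,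
    mul_comm (u _) (M _ _), Finset.sum_comm (γ := Fin d0) (α := Fin K → Fin d)]

theorem Matrix.PosSemidef.mulVec_tensorVec_eq_zero {M : Matrix (IxK d0 d K) (IxK d0 d K) ℂ}
    (hM : M.PosSemidef) {u : Fin d0 × Fin d0 → ℂ} (hu : star u ⬝ᵥ (ptrIO M *ᵥ u) = 0)
    (f : SlotIx d K → ℂ) : M *ᵥ tensorVec u f = 0 := by
  rw [dotProduct_ptrIO_mulVec] at hu
  rw [tensorVec_eq_sum_single, mulVec_sum]
  simp [mulVec_smul, hM.mulVec_eq_zero_of_sum_dotProduct_mulVec_eq_zero hu]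

theorem mulVec_tensorVec_eq_trace_smul {M : Matrix (IxK d0 d K) (IxK d0 d K) ℂ}
    (hM : M.PosSemidef) {c : ℂ} (hptr : ptrIO M = c • choi 1) (u : Fin d0 × Fin d0 → ℂ)
    (f : SlotIx d K → ℂ) (k : Fin d0) :
    M *ᵥ tensorVec u f = (∑ m, u (m, m)) • M *ᵥ tensorVec (Pi.single (k, k) 1) f := by
  set v : Fin d0 × Fin d0 → ℂ := u - (∑ m, u (m, m)) • Pi.single (k, k) 1
  have hv : choi (1 : Matrix (Fin d0) (Fin d0) ℂ) *ᵥ v = 0 := by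
    have htr : ∑ m, v (m, m) = 0 := by simp [v, Pi.single_apply]
    ext q
    simp [choi_one_mulVec, htr]
  have := hM.mulVec_tensorVec_eq_zero (u := v) (by
    rw [hptr, smul_mulVec, hv, smul_zero, dotProduct_zero]) f
  rwa [tensorVec_sub_smul, mulVec_sub, mulVec_smul, sub_eq_zero] at this

theorem exists_dotProduct_mulVec_tensorVec_eq_smul_choi_one
    {M : Matrix (IxK d0 d K) (IxK d0 d K) ℂ} (hM : M.PosSemidef) {c : ℂ}
    (hptr : ptrIO M = c • choi 1) (f : SlotIx d K → ℂ) :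
    ∃ g : ℝ, 0 ≤ g ∧ ∀ q q' : Fin d0 × Fin d0,
      star (tensorVec (Pi.single q 1) f) ⬝ᵥ (M *ᵥ tensorVec (Pi.single q' 1) f) =
        ((g : ℂ) • choi 1) q q' := by
  rcases isEmpty_or_nonempty (Fin d0) with _ | ⟨⟨k⟩⟩
  · exact ⟨0, le_rfl, fun q => isEmptyElim q.1⟩
  set w : Fin d0 × Fin d0 → IxK d0 d K → ℂ := fun q => tensorVec (Pi.single q 1) f
  have hw : ∀ q, M *ᵥ w q = (if q.1 = q.2 then (1 : ℂ) else 0) • M *ᵥ w (k, k) := fun q => by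
    rw [mulVec_tensorVec_eq_trace_smul hM hptr _ f k]
    rcases q with ⟨i, j⟩
    rcases eq_or_ne i j with rfl | hij <;> simp [w, Pi.single_apply, *]
  obtain ⟨g, hg0, hg⟩ := RCLike.nonneg_iff_exists_ofReal.mp (hM.dotProduct_mulVec_nonneg (w (k, k)))
  refine ⟨g, hg0, fun q q' => ?_⟩
  calc star (w q) ⬝ᵥ (M *ᵥ w q')
      = (if q'.1 = q'.2 then (1 : ℂ) else 0) • (star (M *ᵥ w q) ⬝ᵥ w (k, k)) := by
        rw [hw q', dotProduct_smul, hM.1.star_dotProduct_mulVec]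
    _ = (if q'.1 = q'.2 then (1 : ℂ) else 0) • (if q.1 = q.2 then (1 : ℂ) else 0) • (g : ℂ) := by
        rw [hw q, star_smul, smul_dotProduct, ← hM.1.star_dotProduct_mulVec, ← hg]
        simp
    _ = ((g : ℂ) • choi 1) q q' := by
        simp only [Matrix.smul_apply, choi_one_apply, smul_eq_mul]
        ring

def permSlots (σ : Equiv.Perm (Fin K)) : Equiv.Perm (IxK d0 d K) where
  toFun x := (x.1, x.2.1 ∘ σ, x.2.2.1 ∘ σ, x.2.2.2)
  invFun x := (x.1, x.2.1 ∘ σ.symm, x.2.2.1 ∘ σ.symm, x.2.2.2)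
  left_inv x := by simp [Function.comp_assoc]
  right_inv x := by simp [Function.comp_assoc]

theorem PsymF_apply (x y : IxK d0 d K) :
    PsymF d0 d K x y = (K.factorial : ℂ)⁻¹ * ∑ σ, if x = permSlots σ y then 1 else 0 := by
  rw [PsymF, mul_left_comm, Finset.mul_sum]
  congr 1
  refine Finset.sum_congr rfl fun σ _ => ?_
  simp only [permSlots, Equiv.coe_fn_mk, Prod.ext_iff, ite_zero_mul_ite_zero, one_mul]
  exact if_congr (by tauto) rfl rfl

theorem isHermitian_PsymF : (PsymF d0 d K).IsHermitian := by
  ext x y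
  rw [conjTranspose_apply, PsymF_apply, PsymF_apply]
  simp only [star_mul', star_inv₀, star_natCast, star_sum, apply_ite (star : ℂ → ℂ), star_one,
    star_zero]
  congr 1
  refine Fintype.sum_equiv (Equiv.inv _) _ _ fun σ => if_congr ?_ rfl rfl
  exact ((permSlots σ).symm_apply_eq).symm.trans eq_comm

theorem PsymF_mulVec_eq_self {v : IxK d0 d K → ℂ}
    (hv : ∀ σ x, v (permSlots σ x) = v x) : PsymF d0 d K *ᵥ v = v := by
  ext x
  have hσ : ∀ σ, ∑ y, (if x = permSlots σ y then 1 else 0) * v y = v x := fun σ => by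
    simp_rw [← (permSlots σ).symm_apply_eq, ite_mul, one_mul, zero_mul, Finset.sum_ite_eq,
      Finset.mem_univ, if_true]
    simpa using (hv σ ((permSlots σ).symm x)).symm
  simp only [mulVec, dotProduct, PsymF_apply, mul_assoc, ← Finset.mul_sum, Finset.sum_mul]
  rw [Finset.sum_comm, Finset.sum_congr rfl fun σ _ => hσ σ]
  rw [Finset.sum_const, Finset.card_univ, Fintype.card_perm, Fintype.card_fin, nsmul_eq_mul,
    ← mul_assoc, inv_mul_cancel₀ (Nat.cast_ne_zero.mpr K.factorial_ne_zero), one_mul]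

theorem tensorVec_permSlots (u : Fin d0 × Fin d0 → ℂ) {f : SlotIx d K → ℂ}
    (hf : ∀ σ : Equiv.Perm (Fin K), ∀ p, f (p.1 ∘ σ, p.2 ∘ σ) = f p) (σ : Equiv.Perm (Fin K))
    (x : IxK d0 d K) : tensorVec u f (permSlots σ x) = tensorVec u f x :=
  congrArg (u (x.1, x.2.2.2) * ·) (hf σ (x.2.1, x.2.2.1))

/-- The vectorization `|U^{⊗K}⟫ = |U⟫^{⊗K}`. -/
def vecTensorPow (U : Matrix (Fin d) (Fin d) ℂ) (p : SlotIx d K) : ℂ :=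
  ∏ k, U (p.2 k) (p.1 k)

theorem vecTensorPow_comp_perm (U : Matrix (Fin d) (Fin d) ℂ) (σ : Equiv.Perm (Fin K))
    (p : SlotIx d K) : vecTensorPow U (p.1 ∘ σ, p.2 ∘ σ) = vecTensorPow U p :=
  Equiv.prod_comp σ fun k => U (p.2 k) (p.1 k)

theorem actK_choi_apply (C : Matrix (IxK d0 d K) (IxK d0 d K) ℂ) (U : Matrix (Fin d) (Fin d) ℂ)
    (q q' : Fin d0 × Fin d0) :
    actK C (choi U) q q' =
      star (tensorVec (Pi.single q 1) (star (vecTensorPow U))) ⬝ᵥ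
        (C *ᵥ tensorVec (Pi.single q' 1) (star (vecTensorPow U))) := by
  simp only [star_tensorVec, dotProduct, mulVec, star_star, Pi.star_single, star_one]
  simp_rw [sum_tensorVec_single_mul, mul_comm (C _ _), sum_tensorVec_single_mul]
  simp only [actK, choi, vecTensorPow, Fintype.sum_prod_type, Finset.mul_sum, prod_mul_distrib,
    Pi.star_apply, star_prod, mul_comm, mul_assoc, mul_left_comm]

end

theorem neutralization_of_symmetric_subspace_general
    (d d0 K : ℕ)
    (N : Matrix (IxK d0 d K) (IxK d0 d K) ℂ) (hN : N.PosSemidef)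
    (c : ℝ)
    (hsym : ptrIO (PsymF d0 d K * N * PsymF d0 d K) =
      (c : ℂ) • choi (1 : Matrix (Fin d0) (Fin d0) ℂ)) :
    ∀ U ∈ Matrix.unitaryGroup (Fin d) ℂ,
      ∃ cU : ℝ, 0 ≤ cU ∧
        actK N (choi U) = (cU : ℂ) • choi (1 : Matrix (Fin d0) (Fin d0) ℂ) := by
  intro U _
  have hM : (PsymF d0 d K * N * PsymF d0 d K).PosSemidef := by
    simpa only [isHermitian_PsymF.eq] using hN.mul_mul_conjTranspose_same (PsymF d0 d K)
  set f : SlotIx d K → ℂ := star (vecTensorPow U)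
  have hfix : ∀ q, PsymF d0 d K *ᵥ tensorVec (Pi.single q 1) f = tensorVec (Pi.single q 1) f :=
    fun q => PsymF_mulVec_eq_self <|
      tensorVec_permSlots _ fun σ p => congrArg star (vecTensorPow_comp_perm U σ p)
  obtain ⟨cU, hcU, hgram⟩ := exists_dotProduct_mulVec_tensorVec_eq_smul_choi_one hM hsym f
  refine ⟨cU, hcU, ?_⟩
  ext q q'
  rw [actK_choi_apply, ← isHermitian_PsymF.star_dotProduct_mul_mul_mulVec N (hfix q) (hfix q'),
    hgram]

/-- If `Tr_{I O}(P_sym N P_sym) = c · J_id` then `N` neutralizes all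
unitary operations. -/
theorem neutralization_of_symmetric_subspace
    (d d0 K : ℕ) (hd : 1 ≤ d) (hd0 : 1 ≤ d0) (hK : 1 ≤ K)
    (N : Matrix (IxK d0 d K) (IxK d0 d K) ℂ) (hN : N.PosSemidef)
    (htr : N.trace.re ≤ (d : ℝ) ^ K * d0)
    (c : ℝ) (hc : 0 ≤ c)
    (hsym : ptrIO (PsymF d0 d K * N * PsymF d0 d K) =
      (c : ℂ) • choi (1 : Matrix (Fin d0) (Fin d0) ℂ)) :
    ∀ U ∈ Matrix.unitaryGroup (Fin d) ℂ,
      ∃ cU : ℝ, 0 ≤ cU ∧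
        actK N (choi U) = (cU : ℂ) • choi (1 : Matrix (Fin d0) (Fin d0) ℂ) :=
  neutralization_of_symmetric_subspace_general d d0 K N hN c hsym
end
end

section
/- Let m, n ≥ 1, let X be a PSD matrix on ℂ^m ⊗ ℂ^n, let v ∈ ℂ^m be a unit vector and c ≥ 0. If the partial trace of X over the second factor satisfies Tr_B X = c · v v†, then there exists a PSD n×n matrix σ with Tr σ = c such that X = (v v†) ⊗ σ. -/
/-!
Write `B = v ⊗ 1` for the isometry `w ↦ v ⊗ w` and `σ = B† X B`. The hypothesis on the partial
trace gives `Tr σ = v† (Tr_B X) v = c = Tr X`, so the compression of `X` to the range of `B`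
loses no trace. For PSD `X` this forces `X (1 - B B†) = 0`, since `(1 - B B†) X (1 - B B†)` is
PSD with trace zero; hence `X = B B† X B B† = B σ B†`, which is `(v v†) ⊗ σ`.
-/

open Matrix
open scoped ComplexOrder

namespace Matrix

section PosSemidef

variable {𝕜 ι κ : Type*} [RCLike 𝕜] [Fintype ι] [Fintype κ]

open scoped MatrixOrder in
theorem PosSemidef.trace_conjTranspose_mul_mul_eq_zero_iff {X : Matrix ι ι 𝕜}
    (hX : X.PosSemidef) (R : Matrix ι κ 𝕜) : (Rᴴ * X * R).trace = 0 ↔ X * R = 0 := by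
  classical
  obtain ⟨S, rfl⟩ := CStarAlgebra.nonneg_iff_eq_star_mul_self.mp hX.nonneg
  rw [star_eq_conjTranspose, conjTranspose_mul_self_mul_eq_zero, Matrix.mul_assoc,
    Matrix.mul_assoc, ← Matrix.mul_assoc Rᴴ, ← conjTranspose_mul,
    trace_conjTranspose_mul_self_eq_zero_iff]

theorem PosSemidef.eq_mul_mul_conjTranspose_of_trace_eq [DecidableEq κ] {X : Matrix ι ι 𝕜}
    (hX : X.PosSemidef) {B : Matrix ι κ 𝕜} (hB : Bᴴ * B = 1)
    (htr : (Bᴴ * X * B).trace = X.trace) : X = B * (Bᴴ * X * B) * Bᴴ := by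
  classical
  set P : Matrix ι ι 𝕜 := 1 - B * Bᴴ
  have hP : Pᴴ = P := by simp [P]
  have hPP : P * P = P := by
    simp only [P, sub_mul, mul_sub, Matrix.one_mul, Matrix.mul_one, Matrix.mul_assoc,
      ← Matrix.mul_assoc Bᴴ, hB]
    abel
  have hXP : X * P = 0 := by
    rw [← hX.trace_conjTranspose_mul_mul_eq_zero_iff, hP, trace_mul_cycle, hPP, trace_mul_comm,
      mul_sub, Matrix.mul_one, trace_sub, ← Matrix.mul_assoc, trace_mul_cycle, htr, sub_self]
  have hright : X = X * B * Bᴴ := by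
    rw [Matrix.mul_assoc, ← sub_eq_zero, ← hXP, mul_sub, Matrix.mul_one]
  have hleft : X = B * Bᴴ * X := by
    conv_lhs => rw [← hX.isHermitian.eq, hright]
    simp [hX.isHermitian.eq, Matrix.mul_assoc]
  conv_lhs => rw [hright, hleft]
  simp only [Matrix.mul_assoc]

end PosSemidef

variable {R ι ι' κ : Type*} [Fintype κ]

def partialTraceRight [AddCommMonoid R] (X : Matrix (ι × κ) (ι' × κ) R) : Matrix ι ι' R :=
  of fun i j => ∑ k, X (i, k) (j, k)

theorem trace_partialTraceRight [AddCommMonoid R] [Fintype ι] (X : Matrix (ι × κ) (ι × κ) R) :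
    (partialTraceRight X).trace = X.trace :=
  (Fintype.sum_prod_type fun p => X p p).symm

section vecTensor

variable [CommSemiring R] [StarRing R] [DecidableEq κ]

variable (κ) in
def vecTensor (v : ι → R) : Matrix (ι × κ) κ R :=
  of fun p l => v p.1 * (1 : Matrix κ κ R) p.2 l

theorem vecTensor_mul_mul_conjTranspose_apply (v : ι → R) (M : Matrix κ κ R) (i j : ι)
    (k l : κ) : (vecTensor κ v * M * (vecTensor κ v)ᴴ) (i, k) (j, l) = v i * star (v j) * M k l := by
  simp only [vecTensor, one_apply, mul_ite, mul_one, mul_zero, mul_apply, of_apply, ite_mul,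
    zero_mul, Finset.sum_ite_eq, Finset.mem_univ, ↓reduceIte, conjTranspose_apply, apply_ite star,
    star_zero]
  ring

variable [Fintype ι]

theorem conjTranspose_vecTensor_mul_vecTensor (v : ι → R) :
    (vecTensor κ v)ᴴ * vecTensor κ v = (star v ⬝ᵥ v) • (1 : Matrix κ κ R) := by
  ext k l
  simp [vecTensor, mul_apply, Fintype.sum_prod_type, one_apply, dotProduct, apply_ite star,
    ite_mul, eq_comm]

theorem trace_conjTranspose_vecTensor_mul_mul (v : ι → R) (X : Matrix (ι × κ) (ι × κ) R) :
    ((vecTensor κ v)ᴴ * X * vecTensor κ v).trace = star v ⬝ᵥ (partialTraceRight X *ᵥ v) := by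
  simp only [trace, vecTensor, one_apply, mul_ite, mul_one, mul_zero, diag_apply, mul_apply,
    conjTranspose_apply, of_apply, apply_ite star, star_zero, ite_mul, zero_mul,
    Fintype.sum_prod_type, Finset.sum_ite_eq', Finset.mem_univ, ↓reduceIte, Finset.sum_mul,
    mul_assoc, dotProduct, Pi.star_apply, mulVec, partialTraceRight, Finset.mul_sum]
  rw [Finset.sum_comm]
  conv_rhs => rw [Finset.sum_comm]
  exact Finset.sum_congr rfl fun _ _ => Finset.sum_comm

end vecTensor

end Matrix

theorem psd_factorizes_of_rank_one_partial_trace_general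
    (m n : ℕ)
    (X : Matrix (Fin m × Fin n) (Fin m × Fin n) ℂ) (hX : X.PosSemidef)
    (v : Fin m → ℂ) (hv : ∑ i, star (v i) * v i = 1)
    (c : ℝ)
    (htr : ∀ i j : Fin m, (∑ k, X (i, k) (j, k)) = (c : ℂ) * (v i * star (v j))) :
    ∃ σ : Matrix (Fin n) (Fin n) ℂ, σ.PosSemidef ∧ σ.trace = (c : ℂ) ∧
      ∀ (i j : Fin m) (k l : Fin n), X (i, k) (j, l) = v i * star (v j) * σ k l := by
  set B := vecTensor (Fin n) v
  have hnorm : star v ⬝ᵥ v = 1 := hv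
  have hPT : partialTraceRight X = (c : ℂ) • vecMulVec v (star v) := by
    ext i j
    exact htr i j
  have htrX : X.trace = c := by
    rw [← trace_partialTraceRight, hPT, trace_smul, trace_vecMulVec, dotProduct_comm, hnorm,
      smul_eq_mul, mul_one]
  have htrσ : (Bᴴ * X * B).trace = c := by
    rw [trace_conjTranspose_vecTensor_mul_mul, hPT, smul_mulVec, vecMulVec_mulVec, hnorm,
      MulOpposite.op_one, one_smul, dotProduct_smul, hnorm, smul_eq_mul, mul_one]
  have hB : Bᴴ * B = 1 := by rw [conjTranspose_vecTensor_mul_vecTensor, hnorm, one_smul]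
  have hfac := hX.eq_mul_mul_conjTranspose_of_trace_eq hB (htrσ.trans htrX.symm)
  refine ⟨Bᴴ * X * B, hX.conjTranspose_mul_mul_same B, htrσ, fun i j k l => ?_⟩
  rw [← vecTensor_mul_mul_conjTranspose_apply, ← hfac]

theorem psd_factorizes_of_rank_one_partial_trace
    (m n : ℕ) (hm : 1 ≤ m) (hn : 1 ≤ n)
    (X : Matrix (Fin m × Fin n) (Fin m × Fin n) ℂ) (hX : X.PosSemidef)
    (v : Fin m → ℂ) (hv : ∑ i, star (v i) * v i = 1)
    (c : ℝ) (hc : 0 ≤ c)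
    (htr : ∀ i j : Fin m, (∑ k, X (i, k) (j, k)) = (c : ℂ) * (v i * star (v j))) :
    ∃ σ : Matrix (Fin n) (Fin n) ℂ, σ.PosSemidef ∧ σ.trace = (c : ℂ) ∧
      ∀ (i j : Fin m) (k l : Fin n), X (i, k) (j, l) = v i * star (v j) * σ k l :=
  psd_factorizes_of_rank_one_partial_trace_general m n X hX v hv c htr
end

section
/- Let S be a PSD matrix on I0⊗I1⊗O1⊗O0 (each factor ℂ²) and p ≥ 0 such that S commutes with U_{I1} ⊗ U_{O0} for every 2×2 unitary U (where U_{I1}, U_{O0} act as U on the indicated factor and as the identity elsewhere), and such that Tr_{I1 O1}[S (J_U^T ⊗ I_{I0 O0})] = p · J_{U⁻¹} for every 2×2 unitary U. Then S = p · J_Y^{I0 O1} ⊗ J_Y^{I1 O0}, i.e., S is p times the tensor product of the operator J_Y placed on the pair of factors (I0, O1) and the operator J_Y placed on the pair of factors (I1, O0), where J_Y = 2|ψ⁻⟩⟨ψ⁻| with |ψ⁻⟩ = (|01⟩ − |10⟩)/√2 (so J_Y is the Choi matrix of the Pauli-Y unitary channel). -/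
/-!
Regroup the indices of `S` as `(I0, O1) × (I1, O0)`. Commuting with every `U ⊗ U` on `(I1, O0)`
forces each `(I1, O0)`-block into the span of `1` and `SWAP` (three unitaries already suffice: a
phase gate, `X`, and a real rotation), so `S = α ⊗ 1 + β ⊗ SWAP`. Compressing `S` with `|00⟩` and with
`|01⟩ - |10⟩` shows that `α + β` and `α - β` are PSD. The success condition for `U = 1` alone says
`Tr_{O1} α ⊗ 1 + β^Γ = p Φ`; tested against a suitable matrix it becomes
`4 Tr (α + β) + (nonnegative terms) = 0`, hence `α + β = 0`, and the same relation then pins down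
`α = p (1 - SWAP) = p J_Y`.
-/

open Matrix Finset
open scoped ComplexOrder

noncomputable section

/-- Index type for one-slot combs: `I0 × I1 × O1 × O0`. -/
abbrev Ix1 (d0 d : ℕ) := Fin d0 × Fin d × Fin d × Fin d0

/-- `Tr_{I1 O1}[S (Jᵀ ⊗ I_{I0 O0})]`: action of a one-slot comb on a Choi matrix. -/
def act1 {d0 d : ℕ} (S : Matrix (Ix1 d0 d) (Ix1 d0 d) ℂ)
    (J : Matrix (Fin d × Fin d) (Fin d × Fin d) ℂ) :
    Matrix (Fin d0 × Fin d0) (Fin d0 × Fin d0) ℂ :=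
  fun x y => ∑ a, ∑ b, ∑ a', ∑ b',
    S (x.1, a, b, x.2) (y.1, a', b', y.2) * J (a, b) (a', b')

/-- `V ⊗ V` acting on the factors `I1` and `O0` of `I0 × I1 × O1 × O0`. -/
def onI1O0 (V : Matrix (Fin 2) (Fin 2) ℂ) : Matrix (Ix1 2 2) (Ix1 2 2) ℂ :=
  fun x y => (if x.1 = y.1 then 1 else 0) * V x.2.1 y.2.1 *
    (if x.2.2.1 = y.2.2.1 then 1 else 0) * V x.2.2.2 y.2.2.2

/-- The singlet state `|ψ⁻⟩ = (|01⟩ − |10⟩)/√2`. -/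
def psiMinus : Fin 2 × Fin 2 → ℂ := fun x =>
  if x = (0, 1) then ((Real.sqrt 2 : ℂ))⁻¹
  else if x = (1, 0) then -((Real.sqrt 2 : ℂ))⁻¹ else 0

/-- `J_Y = 2 |ψ⁻⟩⟨ψ⁻|`, the Choi matrix of the Pauli-`Y` channel. -/
def JY : Matrix (Fin 2 × Fin 2) (Fin 2 × Fin 2) ℂ :=
  fun x y => 2 * psiMinus x * star (psiMinus y)

open scoped Kronecker

namespace Matrix

section Compress

variable {κ ν : Type*} [Fintype ν]

def compress (T : Matrix (κ × ν) (κ × ν) ℂ) (χ : ν → ℂ) : Matrix κ κ ℂ :=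
  of fun q r => ∑ u, ∑ v, star (χ u) * T (q, u) (r, v) * χ v

lemma PosSemidef.compress [Fintype κ] [DecidableEq κ] {T : Matrix (κ × ν) (κ × ν) ℂ}
    (hT : T.PosSemidef) (χ : ν → ℂ) : (T.compress χ).PosSemidef := by
  let B : Matrix (κ × ν) κ ℂ := of fun x q => if x.1 = q then χ x.2 else 0
  convert hT.conjTranspose_mul_mul_same B using 1
  ext q r
  simp only [Matrix.compress, B, RCLike.star_def, of_apply, mul_apply, conjTranspose_apply,
    apply_ite (starRingEnd ℂ), map_zero, ite_mul, zero_mul, Fintype.sum_prod_type, sum_ite_irrel,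
    sum_const_zero, sum_ite_eq', mem_univ, ↓reduceIte, mul_ite, sum_mul, mul_zero]
  rw [Finset.sum_comm]

lemma compress_add (T T' : Matrix (κ × ν) (κ × ν) ℂ) (χ : ν → ℂ) :
    compress (T + T') χ = compress T χ + compress T' χ := by
  ext q r
  simp [compress, mul_add, add_mul, Finset.sum_add_distrib]

lemma compress_kronecker (A : Matrix κ κ ℂ) (B : Matrix ν ν ℂ) (χ : ν → ℂ) :
    compress (A ⊗ₖ B) χ = (star χ ⬝ᵥ B *ᵥ χ) • A := by
  ext q r
  simp only [compress, of_apply, kronecker_apply, smul_apply, smul_eq_mul, dotProduct, mulVec,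
    Pi.star_apply, Finset.mul_sum, Finset.sum_mul]
  exact Finset.sum_congr rfl fun u _ => Finset.sum_congr rfl fun v _ => by ring

end Compress

lemma apply_eq_zero_of_commute_diagonal {n : Type*} [Fintype n] [DecidableEq n]
    {K : Matrix n n ℂ} {d : n → ℂ} (h : Commute K (diagonal d)) {u v : n} (huv : d u ≠ d v) :
    K u v = 0 := by
  have := congrFun₂ h.eq u v
  rw [mul_diagonal, diagonal_mul] at this
  exact (mul_eq_zero.1 (by linear_combination this)).resolve_right (sub_ne_zero.2 huv.symm)

lemma commute_block_of_commute_one_kronecker {κ ν : Type*} [Fintype κ] [Fintype ν]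
    [DecidableEq κ] {T : Matrix (κ × ν) (κ × ν) ℂ} {W : Matrix ν ν ℂ} (h : Commute T (1 ⊗ₖ W))
    (q r : κ) : Commute (of fun u v => T (q, u) (r, v)) W := by
  ext u v
  simpa [mul_apply, Fintype.sum_prod_type, one_apply] using congrFun₂ h.eq (q, u) (r, v)

end Matrix

def swapMatrix (ν : Type*) [DecidableEq ν] : Matrix (ν × ν) (ν × ν) ℂ :=
  of fun u v => if u = v.swap then 1 else 0

def phaseGate : Matrix (Fin 2) (Fin 2) ℂ := diagonal ![1, Complex.I]

def pauliX : Matrix (Fin 2) (Fin 2) ℂ := !![0, 1; 1, 0]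

def rot345 : Matrix (Fin 2) (Fin 2) ℂ := !![3 / 5, -4 / 5; 4 / 5, 3 / 5]

lemma phaseGate_mem : phaseGate ∈ unitaryGroup (Fin 2) ℂ := by
  rw [mem_unitaryGroup_iff]
  ext i j
  fin_cases i <;> fin_cases j <;> simp [phaseGate, one_apply]

lemma pauliX_mem : pauliX ∈ unitaryGroup (Fin 2) ℂ := by
  rw [mem_unitaryGroup_iff]
  ext i j
  fin_cases i <;> fin_cases j <;> simp [pauliX, mul_apply, Fin.sum_univ_two]

lemma rot345_mem : rot345 ∈ unitaryGroup (Fin 2) ℂ := by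
  rw [mem_unitaryGroup_iff]
  ext i j
  fin_cases i <;> fin_cases j <;>
    simp [rot345, mul_apply, Fin.sum_univ_two, map_div₀, map_ofNat] <;> norm_num

lemma eq_smul_one_add_smul_swapMatrix {K : Matrix (Fin 2 × Fin 2) (Fin 2 × Fin 2) ℂ}
    (hK : ∀ V ∈ unitaryGroup (Fin 2) ℂ, Commute K (V ⊗ₖ V)) :
    K = K (0, 1) (0, 1) • 1 + K (0, 1) (1, 0) • swapMatrix (Fin 2) := by
  have hP := hK _ phaseGate_mem
  rw [phaseGate, diagonal_kronecker_diagonal] at hP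
  have hzero : ∀ u v : Fin 2 × Fin 2, (u.1 : ℕ) + u.2 ≠ v.1 + v.2 → K u v = 0 := by
    intro u v huv
    refine apply_eq_zero_of_commute_diagonal hP ?_
    fin_cases u <;> fin_cases v <;> simp at huv <;> norm_num [Complex.ext_iff]
  have hX (u v) := congrFun₂ (hK _ pauliX_mem).eq u v
  have h₁ : K (1, 0) (0, 1) = K (0, 1) (1, 0) := by
    simpa [mul_apply, Fintype.sum_prod_type, Fin.sum_univ_two, pauliX] using hX (1, 0) (1, 0)
  have h₂ : K (1, 0) (1, 0) = K (0, 1) (0, 1) := by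
    simpa [mul_apply, Fintype.sum_prod_type, Fin.sum_univ_two, pauliX] using hX (1, 0) (0, 1)
  have h₃ : K (1, 1) (1, 1) = K (0, 0) (0, 0) := by
    simpa [mul_apply, Fintype.sum_prod_type, Fin.sum_univ_two, pauliX] using hX (1, 1) (0, 0)
  have hR : K (0, 0) (0, 0) = K (0, 1) (0, 1) + K (1, 0) (0, 1) := by
    have := congrFun₂ (hK _ rot345_mem).eq (0, 0) (0, 1)
    simp only [rot345, mul_apply, kroneckerMap_apply, of_apply, cons_val', cons_val_zero,
      cons_val_fin_one, cons_val_one, Fintype.sum_prod_type, Fin.sum_univ_two] at this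
    linear_combination (-25 / 12 : ℂ) * this
      - (4 / 3 : ℂ) * hzero (0, 0) (1, 0) (by decide) + hzero (0, 0) (1, 1) (by decide)
      - (4 / 3 : ℂ) * hzero (1, 1) (0, 1) (by decide)
  ext u v
  fin_cases u <;> fin_cases v <;> simp [swapMatrix, one_apply, h₁, h₂, h₃, hR] <;>
    exact hzero _ _ (by decide)

-- `((i0, o1), (i1, o0)) ↦ (i0, i1, o1, o0)`
def regroupEquiv (d0 d : ℕ) : (Fin d0 × Fin d) × (Fin d × Fin d0) ≃ Ix1 d0 d :=
  (Equiv.prodProdProdComm _ _ _ _).trans (Equiv.prodAssoc _ _ _)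

def regroup {d0 d : ℕ} (S : Matrix (Ix1 d0 d) (Ix1 d0 d) ℂ) :
    Matrix ((Fin d0 × Fin d) × (Fin d × Fin d0)) ((Fin d0 × Fin d) × (Fin d × Fin d0)) ℂ :=
  S.submatrix (regroupEquiv d0 d) (regroupEquiv d0 d)

lemma regroup_mul {d0 d : ℕ} (S S' : Matrix (Ix1 d0 d) (Ix1 d0 d) ℂ) :
    regroup (S * S') = regroup S * regroup S' :=
  (submatrix_mul_equiv _ _ _ _ _).symm

lemma regroup_onI1O0 (V : Matrix (Fin 2) (Fin 2) ℂ) : regroup (onI1O0 V) = 1 ⊗ₖ (V ⊗ₖ V) := by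
  ext ⟨⟨i, b⟩, a, o⟩ ⟨⟨j, b'⟩, a', o'⟩
  simp [regroup, regroupEquiv, onI1O0, one_apply, ← ite_and, and_comm]

lemma exists_regroup_eq_kronecker {S : Matrix (Ix1 2 2) (Ix1 2 2) ℂ}
    (hcomm : ∀ U ∈ unitaryGroup (Fin 2) ℂ, Commute S (onI1O0 U)) :
    ∃ α β : Matrix (Fin 2 × Fin 2) (Fin 2 × Fin 2) ℂ,
      regroup S = α ⊗ₖ 1 + β ⊗ₖ swapMatrix (Fin 2) := by
  have hblock : ∀ q r, (of fun u v => regroup S (q, u) (r, v)) = _ := fun q r =>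
    eq_smul_one_add_smul_swapMatrix fun V hV => commute_block_of_commute_one_kronecker
      (by simpa only [Commute, SemiconjBy, regroup_mul, regroup_onI1O0] using
        congrArg regroup (hcomm V hV).eq) q r
  refine ⟨of fun q r => regroup S (q, (0, 1)) (r, (0, 1)),
    of fun q r => regroup S (q, (0, 1)) (r, (1, 0)), ?_⟩
  ext ⟨q, u⟩ ⟨r, v⟩
  simpa using congrFun₂ (hblock q r) u v

lemma act1_choi_one_apply_of_regroup_eq {d : ℕ} {S : Matrix (Ix1 d d) (Ix1 d d) ℂ}
    {α β : Matrix (Fin d × Fin d) (Fin d × Fin d) ℂ}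
    (h : regroup S = α ⊗ₖ 1 + β ⊗ₖ swapMatrix (Fin d)) (i o j p : Fin d) :
    act1 S (choi 1) (i, o) (j, p) =
      (if o = p then ∑ a, α (i, a) (j, a) else 0) + β (i, p) (j, o) := by
  have hS : ∀ a b a' b', S (i, a, b, o) (j, a', b', p) =
      α (i, b) (j, b') * (1 : Matrix (Fin d × Fin d) _ ℂ) (a, o) (a', p)
        + β (i, b) (j, b') * swapMatrix (Fin d) (a, o) (a', p) :=
    fun a b a' b' => congrFun₂ h ((i, b), (a, o)) ((j, b'), (a', p))
  simp [act1, choi, hS, one_apply, swapMatrix, Finset.sum_add_distrib, ite_and,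
    Finset.sum_ite_irrel]

lemma posSemidef_add_and_sub_of_regroup_eq {S : Matrix (Ix1 2 2) (Ix1 2 2) ℂ}
    {α β : Matrix (Fin 2 × Fin 2) (Fin 2 × Fin 2) ℂ} (hS : S.PosSemidef)
    (hT : regroup S = α ⊗ₖ 1 + β ⊗ₖ swapMatrix (Fin 2)) :
    (α + β).PosSemidef ∧ (α - β).PosSemidef := by
  have hpsd : (regroup S).PosSemidef := hS.submatrix _
  refine ⟨by simpa [hT, compress_add, compress_kronecker, swapMatrix] using
    hpsd.compress (Pi.single (0, 0) 1), ?_⟩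
  have h2 : ((2 : ℂ) • (α - β)).PosSemidef := by
    convert hpsd.compress (Pi.single (0, 1) 1 - Pi.single (1, 0) 1) using 1
    simp [hT, compress_add, compress_kronecker, swapMatrix, mulVec, dotProduct,
      Fintype.sum_prod_type, Fin.sum_univ_two, one_add_one_eq_two, ← neg_add, neg_smul,
      sub_eq_add_neg]
  simpa using h2.smul (inv_nonneg.2 (zero_le_two (α := ℂ)))

lemma add_eq_zero_of_posSemidef {α β : Matrix (Fin 2 × Fin 2) (Fin 2 × Fin 2) ℂ} {c : ℂ}
    (hrel : ∀ i o j p : Fin 2,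
      (if o = p then ∑ a, α (i, a) (j, a) else 0) + β (i, p) (j, o) = if i = o ∧ j = p then c else 0)
    (hM : (α + β).PosSemidef) (hN : (α - β).PosSemidef) :
    α + β = 0 := by
  let anti : Fin 2 × Fin 2 → ℂ := Pi.single (0, 1) 1 - Pi.single (1, 0) 1
  let sym : Fin 2 × Fin 2 → ℂ := Pi.single (0, 1) 1 + Pi.single (1, 0) 1
  have key : 4 * (α + β).trace + (star anti ⬝ᵥ (α + β) *ᵥ anti + 2 * (α - β) (0, 0) (0, 0)
      + 2 * (α - β) (1, 1) (1, 1) + star sym ⬝ᵥ (α - β) *ᵥ sym) = 0 := by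
    have e₁ := hrel 0 0 0 0
    have e₂ := hrel 1 0 1 0
    have e₃ := hrel 0 1 0 1
    have e₄ := hrel 1 1 1 1
    have e₅ := hrel 0 0 1 1
    have e₆ := hrel 1 1 0 0
    simp only [↓reduceIte, Fin.sum_univ_two, and_self, one_ne_zero, zero_ne_one, zero_add]
      at e₁ e₂ e₃ e₄ e₅ e₆
    simp only [anti, sym, trace, diag_apply, Matrix.add_apply, Matrix.sub_apply,
      Fintype.sum_prod_type, Fin.sum_univ_two, star_sub, star_add, Pi.star_single, star_one,
      mulVec_sub, mulVec_add, mulVec_single, MulOpposite.op_one, one_smul, dotProduct_sub,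
      sub_dotProduct, dotProduct_add, add_dotProduct, single_dotProduct, col_apply, one_mul]
    -- pairing with a test matrix `W` with `⟨Φ|W|Φ⟩ = 0` (so `c` drops out) and `W^Γ = 2 (2 - SWAP)`
    linear_combination 2 * e₁ + 4 * e₂ + 4 * e₃ + 2 * e₄ - 2 * e₅ - 2 * e₆
  have hrest : 0 ≤ star anti ⬝ᵥ (α + β) *ᵥ anti + 2 * (α - β) (0, 0) (0, 0)
      + 2 * (α - β) (1, 1) (1, 1) + star sym ⬝ᵥ (α - β) *ᵥ sym := by
    have := hN.diag_nonneg (i := (0, 0))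
    have := hN.diag_nonneg (i := (1, 1))
    have := hM.dotProduct_mulVec_nonneg anti
    have := hN.dotProduct_mulVec_nonneg sym
    positivity
  have htr := ((add_eq_zero_iff_of_nonneg (mul_nonneg zero_le_four hM.trace_nonneg) hrest).1 key).1
  exact hM.trace_eq_zero_iff.1 ((mul_eq_zero.1 htr).resolve_left four_ne_zero)

lemma eq_smul_one_sub_swapMatrix {α β : Matrix (Fin 2 × Fin 2) (Fin 2 × Fin 2) ℂ} {c : ℂ}
    (hrel : ∀ i o j p : Fin 2,
      (if o = p then ∑ a, α (i, a) (j, a) else 0) + β (i, p) (j, o) = if i = o ∧ j = p then c else 0)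
    (h0 : α + β = 0) : α = c • (1 - swapMatrix (Fin 2)) := by
  obtain rfl : β = -α := eq_neg_of_add_eq_zero_right h0
  ext ⟨i, b⟩ ⟨j, b'⟩
  rcases eq_or_ne b b' with rfl | hb
  · have h := hrel i (b + 1) j (b + 1)
    fin_cases b <;> fin_cases i <;> fin_cases j <;> simp [Fin.sum_univ_two, swapMatrix] at h ⊢ <;>
      linear_combination h
  · have h := hrel i b' j b
    simp only [hb, hb.symm, ↓reduceIte, Matrix.neg_apply, zero_add, @eq_comm _ j b, swapMatrix,
      Matrix.smul_apply, Matrix.sub_apply, one_apply, Prod.mk.injEq, and_false, of_apply,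
      Prod.swap_prod_mk, zero_sub, smul_eq_mul, mul_neg, mul_ite, mul_one, mul_zero] at h ⊢
    linear_combination -h

lemma JY_eq_one_sub_swapMatrix : JY = 1 - swapMatrix (Fin 2) := by
  have hsqrt : (Real.sqrt 2 : ℂ)⁻¹ * (Real.sqrt 2 : ℂ)⁻¹ = 2⁻¹ := by
    rw [← mul_inv, ← Complex.ofReal_mul, Real.mul_self_sqrt zero_le_two, Complex.ofReal_ofNat]
  ext ⟨i, b⟩ ⟨j, b'⟩
  fin_cases i <;> fin_cases b <;> fin_cases j <;> fin_cases b' <;>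
    simp [JY, psiMinus, swapMatrix, one_apply, Complex.conj_ofReal] <;>
    linear_combination 2 * hsqrt

theorem covariant_success_is_JY_tensor_JY_general
    (S : Matrix (Ix1 2 2) (Ix1 2 2) ℂ) (hS : S.PosSemidef) (p : ℝ)
    (hcomm : ∀ U ∈ Matrix.unitaryGroup (Fin 2) ℂ, S * onI1O0 U = onI1O0 U * S)
    (hSucc : ∀ U ∈ Matrix.unitaryGroup (Fin 2) ℂ,
      act1 S (choi U) = (p : ℂ) • choi (star U)) :
    ∀ (i0 j0 a a' b b' o0 p0 : Fin 2),
      S (i0, a, b, o0) (j0, a', b', p0) =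
        (p : ℂ) * JY (i0, b) (j0, b') * JY (a, o0) (a', p0) := by
  obtain ⟨α, β, hT⟩ := exists_regroup_eq_kronecker hcomm
  have hrel (i o j p' : Fin 2) : (if o = p' then ∑ a, α (i, a) (j, a) else 0) + β (i, p') (j, o)
      = if i = o ∧ j = p' then (p : ℂ) else 0 := by
    rw [← act1_choi_one_apply_of_regroup_eq hT, hSucc 1 (one_mem _)]
    simp [choi, one_apply, ← ite_and, eq_comm, and_comm]
  obtain ⟨hM, hN⟩ := posSemidef_add_and_sub_of_regroup_eq hS hT
  have h0 := add_eq_zero_of_posSemidef hrel hM hN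
  have hα := eq_smul_one_sub_swapMatrix hrel h0
  intro i0 j0 a a' b b' o0 p0
  change regroup S ((i0, b), (a, o0)) ((j0, b'), (a', p0)) = _
  rw [hT, eq_neg_of_add_eq_zero_right h0, hα, JY_eq_one_sub_swapMatrix]
  simp only [Matrix.add_apply, kronecker_apply, Matrix.neg_apply, Matrix.smul_apply,
    Matrix.sub_apply, smul_eq_mul]
  ring

theorem covariant_success_is_JY_tensor_JY
    (S : Matrix (Ix1 2 2) (Ix1 2 2) ℂ) (hS : S.PosSemidef) (p : ℝ) (hp : 0 ≤ p)
    (hcomm : ∀ U ∈ Matrix.unitaryGroup (Fin 2) ℂ, S * onI1O0 U = onI1O0 U * S)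
    (hSucc : ∀ U ∈ Matrix.unitaryGroup (Fin 2) ℂ,
      act1 S (choi U) = (p : ℂ) • choi (star U)) :
    ∀ (i0 j0 a a' b b' o0 p0 : Fin 2),
      S (i0, a, b, o0) (j0, a', b', p0) =
        (p : ℂ) * JY (i0, b) (j0, b') * JY (a, o0) (a', p0) :=
  covariant_success_is_JY_tensor_JY_general S hS p hcomm hSucc

end
end
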